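/- For all l ∈ [0, π_2/2], the function θ(l) = ∫_0^l cleaf_2(t) dt satisfies 0 ≤ θ(l) ≤ π/4, with θ(π_2/2) = π/4. -/

import Mathlib

/-!
`F x = ∫_x^1 dt/√(1-t⁴)` decreases strictly from `π₂/2` to `0` with `F' = -1/√(1-x⁴)`, and
`cleaf` inverts it. The one-dimensional change of variables `l = F x` for injective maps, which
needs no regularity of `cleaf`, turns `∫_0^{π₂/2} cleaf` into `∫_0^1 x/√(1-x⁴) dx`, and
`arcsin (x²) / 2` is a primitive of the latter, so the integral is `π/4`. The bounds hold
because `cleaf ≥ 0`.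
-/

open MeasureTheory intervalIntegral Set Real

section InverseOfPrimitive

variable {g : ℝ → ℝ} {a b : ℝ}

theorem strictAntiOn_integral_left (hg : IntervalIntegrable g volume a b)
    (hpos : ∀ x ∈ Ioo a b, 0 < g x) : StrictAntiOn (fun x => ∫ t in x..b, g t) (Icc a b) := by
  intro x hx y hy hxy
  have hgi : ∀ u ∈ Icc a b, ∀ v ∈ Icc a b, IntervalIntegrable g volume u v := fun u hu v hv =>
    hg.mono_set (uIcc_subset_uIcc (Icc_subset_uIcc hu) (Icc_subset_uIcc hv))
  have hsplit := integral_add_adjacent_intervals (hgi x hx y hy)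
    (hgi y hy b (right_mem_Icc.2 (hx.1.trans hx.2)))
  have hpos' : 0 < ∫ t in x..y, g t := intervalIntegral_pos_of_pos_on (hgi x hx y hy)
    (fun t ht => hpos t ⟨hx.1.trans_lt ht.1, ht.2.trans_le hy.2⟩) hxy
  simp only
  linarith

theorem hasDerivAt_integral_left (hg : IntervalIntegrable g volume a b)
    (hcont : ContinuousOn g (Ioo a b)) {x : ℝ} (hx : x ∈ Ioo a b) :
    HasDerivAt (fun u => ∫ t in u..b, g t) (-g x) x :=
  integral_hasDerivAt_left
    (hg.mono_set (uIcc_subset_uIcc (Icc_subset_uIcc (Ioo_subset_Icc_self hx)) right_mem_uIcc))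
    (hcont.stronglyMeasurableAtFilter isOpen_Ioo x hx)
    (hcont.continuousAt (isOpen_Ioo.mem_nhds hx))

theorem intervalIntegrable_and_integral_eq_of_rightInv_integral_left (hab : a ≤ b)
    (hg : IntervalIntegrable g volume a b) (hpos : ∀ x ∈ Ioo a b, 0 < g x)
    (hcont : ContinuousOn g (Ioo a b)) {c : ℝ → ℝ}
    (hc : ∀ l ∈ Icc 0 (∫ t in a..b, g t), c l ∈ Icc a b ∧ ∫ t in (c l)..b, g t = l) :
    IntervalIntegrable c volume 0 (∫ t in a..b, g t) ∧
      ∫ l in (0)..(∫ t in a..b, g t), c l = ∫ x in a..b, x * g x := by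
  set F : ℝ → ℝ := fun x => ∫ t in x..b, g t
  have hanti := strictAntiOn_integral_left hg hpos
  have hFb : F b = 0 := integral_same
  have hcF : ∀ x ∈ Icc a b, c (F x) = x := by
    intro x hx
    have hFx : F x ∈ Icc 0 (F a) := by
      rw [← hFb]
      exact ⟨hanti.antitoneOn hx (right_mem_Icc.2 hab) hx.2,
        hanti.antitoneOn (left_mem_Icc.2 hab) hx hx.1⟩
    exact hanti.injOn (hc _ hFx).1 hx (hc _ hFx).2
  have himage : F '' Ioo a b = Ioo 0 (F a) := by
    apply Subset.antisymm
    · rintro _ ⟨x, hx, rfl⟩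
      rw [← hFb]
      exact ⟨hanti (Ioo_subset_Icc_self hx) (right_mem_Icc.2 hab) hx.2,
        hanti (left_mem_Icc.2 hab) (Ioo_subset_Icc_self hx) hx.1⟩
    · intro l hl
      obtain ⟨hcl, hFcl⟩ := hc l (Ioo_subset_Icc_self hl)
      refine ⟨c l, ⟨lt_of_le_of_ne hcl.1 ?_, lt_of_le_of_ne hcl.2 ?_⟩, hFcl⟩
      · rintro h; rw [← h] at hFcl; exact hl.2.ne hFcl.symm
      · rintro h; rw [h, integral_same] at hFcl; exact hl.1.ne hFcl
  have hderiv : ∀ x ∈ Ioo a b, HasDerivWithinAt F (-g x) (Ioo a b) x := fun x hx =>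
    (hasDerivAt_integral_left hg hcont hx).hasDerivWithinAt
  have hinj : InjOn F (Ioo a b) := hanti.injOn.mono Ioo_subset_Icc_self
  have hjac : EqOn (fun x => |-g x| • c (F x)) (fun x => x * g x) (Ioo a b) := by
    intro x hx
    simp only [smul_eq_mul, abs_neg, abs_of_pos (hpos x hx), hcF x (Ioo_subset_Icc_self hx)]
    ring
  have hxg : IntegrableOn (fun x => x * g x) (Ioo a b) :=
    (hg.1.continuousOn_mul_of_subset continuousOn_id isCompact_Icc measurableSet_Ioc
      Ioc_subset_Icc_self).mono_set Ioo_subset_Ioc_self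
  have hFa : 0 ≤ F a := hFb ▸ hanti.antitoneOn (left_mem_Icc.2 hab) (right_mem_Icc.2 hab) hab
  have hcint : IntegrableOn c (Ioo 0 (F a)) := by
    rw [← himage, integrableOn_image_iff_integrableOn_abs_deriv_smul measurableSet_Ioo hderiv hinj]
    exact hxg.congr_fun hjac.symm measurableSet_Ioo
  refine ⟨(intervalIntegrable_iff_integrableOn_Ioo_of_le hFa).2 hcint, ?_⟩
  show ∫ l in (0)..(F a), c l = _
  rw [integral_of_le hFa, integral_of_le hab, integral_Ioc_eq_integral_Ioo,
    integral_Ioc_eq_integral_Ioo, ← himage,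
    integral_image_eq_integral_abs_deriv_smul measurableSet_Ioo hderiv hinj,
    setIntegral_congr_fun measurableSet_Ioo hjac]

end InverseOfPrimitive

theorem intervalIntegrable_one_div_sqrt_one_sub_sq :
    IntervalIntegrable (fun t : ℝ => 1 / √(1 - t ^ 2)) volume 0 1 :=
  intervalIntegrable_deriv_of_nonneg continuous_arcsin.continuousOn
    (fun x hx => hasDerivAt_arcsin (by simp at hx; linarith [hx.1]) (by simp at hx; linarith [hx.2]))
    (fun _ _ => by positivity)

theorem intervalIntegrable_one_div_sqrt_one_sub_pow_four :
    IntervalIntegrable (fun t : ℝ => 1 / √(1 - t ^ 4)) volume 0 1 := by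
  refine intervalIntegrable_one_div_sqrt_one_sub_sq.mono_fun'
    (by fun_prop : Measurable fun t : ℝ => 1 / √(1 - t ^ 4)).aestronglyMeasurable ?_
  rw [uIoc_of_le zero_le_one]
  filter_upwards [ae_restrict_mem measurableSet_Ioc] with t ⟨ht0, ht1⟩
  rw [norm_of_nonneg (by positivity)]
  rcases ht1.eq_or_lt with rfl | ht1
  · simp -- both sides are the junk value `1 / 0 = 0`
  · have : 0 < 1 - t ^ 2 := by nlinarith
    exact one_div_le_one_div_of_le (sqrt_pos.2 this) (sqrt_le_sqrt (by nlinarith [pow_pos ht0 2]))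

theorem hasDerivAt_arcsin_sq_div_two {x : ℝ} (hx : x ^ 2 ≠ 1) :
    HasDerivAt (fun t => arcsin (t ^ 2) / 2) (x * (1 / √(1 - x ^ 4))) x := by
  have h := ((hasDerivAt_arcsin (by nlinarith) hx).comp (h := fun t => t ^ 2) x
    (by simpa using hasDerivAt_pow 2 x)).div_const 2
  refine h.congr_deriv ?_
  rw [← pow_mul]
  ring

theorem integral_mul_one_div_sqrt_one_sub_pow_four :
    ∫ x in (0:ℝ)..1, x * (1 / √(1 - x ^ 4)) = π / 4 := by
  have hderiv : ∀ x ∈ Ioo (0:ℝ) 1,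
      HasDerivAt (fun t => arcsin (t ^ 2) / 2) (x * (1 / √(1 - x ^ 4))) x := fun x hx =>
    hasDerivAt_arcsin_sq_div_two (by nlinarith [hx.1, hx.2])
  have hcont : ContinuousOn (fun t : ℝ => arcsin (t ^ 2) / 2) (Icc 0 1) := by fun_prop
  rw [integral_eq_sub_of_hasDerivAt_of_le zero_le_one hcont hderiv
    (intervalIntegrable_deriv_of_nonneg (by simpa) (by simpa using hderiv)
      (fun x hx => mul_nonneg (by simp at hx; exact hx.1.le) (by positivity)))]
  norm_num [arcsin_one]
  ring

theorem theta_range (π₂ : ℝ) (hπ : π₂ = 2 * ∫ t in (0:ℝ)..1, 1 / Real.sqrt (1 - t ^ 4))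
    (cleaf : ℝ → ℝ)
    (hc : ∀ l ∈ Set.Icc 0 (π₂ / 2), cleaf l ∈ Set.Icc (0:ℝ) 1 ∧
      (∫ t in (cleaf l)..1, 1 / Real.sqrt (1 - t ^ 4)) = l) :
    (∀ l ∈ Set.Icc 0 (π₂ / 2),
      0 ≤ (∫ t in (0:ℝ)..l, cleaf t) ∧ (∫ t in (0:ℝ)..l, cleaf t) ≤ Real.pi / 4) ∧
    (∫ t in (0:ℝ)..(π₂ / 2), cleaf t) = Real.pi / 4 := by
  have hL : π₂ / 2 = ∫ t in (0:ℝ)..1, 1 / √(1 - t ^ 4) := by rw [hπ]; ring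
  rw [hL] at hc ⊢
  have hsqrt : ∀ x ∈ Ioo (0:ℝ) 1, 0 < √(1 - x ^ 4) := fun x hx =>
    sqrt_pos.2 (sub_pos.2 (pow_lt_one₀ hx.1.le hx.2 four_ne_zero))
  obtain ⟨hint, hθ⟩ := intervalIntegrable_and_integral_eq_of_rightInv_integral_left zero_le_one
    intervalIntegrable_one_div_sqrt_one_sub_pow_four
    (fun x hx => one_div_pos.2 (hsqrt x hx))
    (continuousOn_const.div (by fun_prop) fun x hx => (hsqrt x hx).ne') hc
  rw [integral_mul_one_div_sqrt_one_sub_pow_four] at hθ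
  refine ⟨fun l hl => ⟨?_, ?_⟩, hθ⟩
  · exact integral_nonneg hl.1 fun t ht => (hc t ⟨ht.1, ht.2.trans hl.2⟩).1.1
  · refine hθ ▸ integral_mono_interval le_rfl hl.1 hl.2 ?_ hint
    filter_upwards [ae_restrict_mem measurableSet_Ioc] with t ht
    exact (hc t (Ioc_subset_Icc_self ht)).1.1
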